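/- arXiv:2010.09973 — 9 statements merged into one kernel-verified Lean document; each statement's English description precedes it below -/
import Mathlib

section
/- Let n and p be positive integers with n ≥ p+5, and let G be a graph of order n. If the complement of G has a connected component which is a cycle of length at least 4, then G contains the book B_p as a subgraph. -/
/-!
Let `x` and `y` be two vertices at distance two on the cycle component `C` of `Gᶜ`. They are
distinct and non-adjacent in `Gᶜ`, hence adjacent in `G`. A vertex other than `x` and `y` fails to
be a common `G`-neighbour of them only if it is a `Gᶜ`-neighbour of one of them, and since `C` is a
whole component these are cycle vertices: the three vertices next to `x` or `y` on the cycle.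
So the edge `xy` lies in at least `n - 5 ≥ p` triangles.
-/

open SimpleGraph

/-- A graph contains the book `B_p` iff some edge has at least `p` common neighbors. -/
def SimpleGraph.ContainsBook {V : Type*} (G : SimpleGraph V) (p : ℕ) : Prop :=
  ∃ x y, G.Adj x y ∧ p ≤ (G.commonNeighbors x y).ncard

/-- The Turán number `ex(n, B_p)`: the maximum number of edges of a simple graph
on `n` vertices containing no book `B_p`. -/
noncomputable def bookTuranNumber (n p : ℕ) : ℕ :=
  sSup {e : ℕ | ∃ G : SimpleGraph (Fin n), ¬ G.ContainsBook p ∧ G.edgeSet.ncard = e}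

/-- The disjoint union of `m` copies of the complete graph `K_k`. -/
def unionComplete (m k : ℕ) : SimpleGraph (Fin m × Fin k) :=
  SimpleGraph.fromRel fun a b => a.1 = b.1

/-- The join `G ∨ H` of two graphs. -/
def SimpleGraph.join {α β : Type*} (G : SimpleGraph α) (H : SimpleGraph β) :
    SimpleGraph (α ⊕ β) := (Gᶜ ⊕g Hᶜ)ᶜ

/-- A disjoint union of cycles `C_{i 0} + ⋯ + C_{i (t-1)}`. -/
def cycleFamily (t : ℕ) (i : Fin t → ℕ) : SimpleGraph (Σ j : Fin t, Fin (i j)) :=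
  SimpleGraph.fromRel fun a b => ∃ h : a.1 = b.1, (SimpleGraph.cycleGraph (i b.1)).Adj (h ▸ a.2) b.2

theorem Fin.self_ne_add_two {n : ℕ} (v : Fin (n + 3)) : v ≠ v + 2 := by
  simp [Fin.ext_iff, Nat.mod_eq_of_lt (show 2 < n + 3 by omega)]

namespace SimpleGraph

variable {V : Type*}

theorem compl_insert_insert_compl_neighborSet_union_subset_commonNeighbors
    (G : SimpleGraph V) (x y : V) :
    (insert x (insert y (Gᶜ.neighborSet x ∪ Gᶜ.neighborSet y)))ᶜ ⊆ G.commonNeighbors x y := by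
  intro z hz
  simp only [Set.mem_compl_iff, Set.mem_insert_iff, Set.mem_union, mem_neighborSet, compl_adj,
    not_or, not_and, not_not] at hz
  obtain ⟨hzx, hzy, hx, hy⟩ := hz
  exact ⟨hx (Ne.symm hzx), hy (Ne.symm hzy)⟩

theorem card_le_ncard_commonNeighbors_add [Fintype V] (G : SimpleGraph V) (x y : V) :
    Fintype.card V ≤
      (G.commonNeighbors x y).ncard + 2 + (Gᶜ.neighborSet x ∪ Gᶜ.neighborSet y).ncard := by
  set B := insert x (insert y (Gᶜ.neighborSet x ∪ Gᶜ.neighborSet y))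
  have hB : B.ncard ≤ (Gᶜ.neighborSet x ∪ Gᶜ.neighborSet y).ncard + 1 + 1 :=
    (Set.ncard_insert_le _ _).trans (Nat.add_le_add_right (Set.ncard_insert_le _ _) 1)
  have hcompl : Bᶜ.ncard ≤ (G.commonNeighbors x y).ncard := Set.ncard_le_ncard
    (compl_insert_insert_compl_neighborSet_union_subset_commonNeighbors G x y)
  have hsum := Set.ncard_add_ncard_compl B
  rw [Nat.card_eq_fintype_card] at hsum
  omega

theorem neighborSet_eq_image_of_iso_induce {W : Type*} {H : SimpleGraph V} {C : SimpleGraph W}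
    {s : Set V} (hs : ∀ x ∈ s, ∀ y, H.Adj x y → y ∈ s) (e : H.induce s ≃g C) (w : W) :
    H.neighborSet (e.symm w) = (fun u => (e.symm u : V)) '' C.neighborSet w := by
  ext z
  constructor
  · intro hz
    refine ⟨e ⟨z, hs _ (e.symm w).2 z hz⟩, ?_, by simp⟩
    rw [mem_neighborSet, ← e.symm.map_adj_iff]
    simpa using hz
  · rintro ⟨u, hu, rfl⟩
    exact e.symm.map_adj_iff.mpr hu

open Fin.CommRing in
theorem cycleGraph_neighborSet_union_neighborSet_add_two {n : ℕ} (v : Fin (n + 2)) :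
    (cycleGraph (n + 2)).neighborSet v ∪ (cycleGraph (n + 2)).neighborSet (v + 2) =
      {v - 1, v + 1, v + 3} := by
  rw [cycleGraph_neighborSet, cycleGraph_neighborSet,
    show v + 2 - 1 = v + 1 by ring, show v + 2 + 1 = v + 3 by ring]
  ext w
  simp only [Set.mem_union, Set.mem_insert_iff, Set.mem_singleton_iff]
  tauto

open Fin.CommRing in
theorem cycleGraph_not_adj_add_two {n : ℕ} (v : Fin (n + 4)) :
    ¬ (cycleGraph (n + 4)).Adj v (v + 2) := by
  rw [cycleGraph_adj, show v - (v + 2) = -2 by ring, show v + 2 - v = 2 by ring,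
    neg_eq_iff_add_eq_zero]
  simp only [Fin.ext_iff, Fin.val_add, Fin.val_two, Fin.val_one, Fin.val_zero]
  rw [Nat.mod_eq_of_lt (by omega)]
  omega

end SimpleGraph

theorem stmt2_general (n p : ℕ) (hn : p + 5 ≤ n) {V : Type*} [Fintype V]
    (hV : Fintype.card V = n) (G : SimpleGraph V)
    (h : ∃ (k : ℕ) (s : Set V), 4 ≤ k ∧ (∀ x ∈ s, ∀ y, Gᶜ.Adj x y → y ∈ s) ∧
      Nonempty (SimpleGraph.induce s Gᶜ ≃g SimpleGraph.cycleGraph k)) :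
    G.ContainsBook p := by
  obtain ⟨k, s, hk, hs, ⟨e⟩⟩ := h
  obtain ⟨m, rfl⟩ : ∃ m, k = m + 4 := ⟨k - 4, by omega⟩
  set x : V := (e.symm 0).1
  set y : V := (e.symm 2).1
  have hxy : G.Adj x y := by
    have hne : x ≠ y := fun h =>
      Fin.self_ne_add_two 0 (by simpa using e.symm.injective (Subtype.ext h))
    have hnadj : ¬ Gᶜ.Adj x y := fun h =>
      cycleGraph_not_adj_add_two 0 (by simpa using e.symm.map_adj_iff.mp h)
    simpa [hne] using hnadj
  have hN : (Gᶜ.neighborSet x ∪ Gᶜ.neighborSet y).ncard ≤ 3 := by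
    classical
    have hcyc := cycleGraph_neighborSet_union_neighborSet_add_two (n := m + 2) (0 : Fin (m + 4))
    rw [zero_add] at hcyc
    rw [neighborSet_eq_image_of_iso_induce hs e, neighborSet_eq_image_of_iso_induce hs e,
      ← Set.image_union, hcyc]
    refine (Set.ncard_image_le (Set.toFinite _)).trans ?_
    simpa [← Set.ncard_coe_finset] using Finset.card_le_three
  have hcard := card_le_ncard_commonNeighbors_add G x y
  exact ⟨x, y, hxy, by omega⟩

theorem stmt2 (n p : ℕ) (hp : 1 ≤ p) (hn : p + 5 ≤ n) {V : Type*} [Fintype V]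
    (hV : Fintype.card V = n) (G : SimpleGraph V)
    (h : ∃ (k : ℕ) (s : Set V), 4 ≤ k ∧ (∀ x ∈ s, ∀ y, Gᶜ.Adj x y → y ∈ s) ∧
      Nonempty (SimpleGraph.induce s Gᶜ ≃g SimpleGraph.cycleGraph k)) :
    G.ContainsBook p :=
  stmt2_general n p hn hV G h
end

section
/- For every even positive integer p, the Turán number ex(p+2, B_p) equals p(p+2)/2. -/
open SimpleGraph

/-! Two vertices adjacent to everything span a book `B_{n-2}` on the edge joining them, so a
`B_p`-free graph on `p + 2` vertices has at most one vertex of degree `p + 1` and all other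
degrees at most `p`; summing degrees gives `2e ≤ (p + 2) p + 1`. Conversely, for even `p` the
complement of a perfect matching of `K_{p+2}` is `p`-regular, so an edge has fewer than `p`
common neighbours, and it has exactly `p (p + 2) / 2` edges. -/

open Finset

namespace SimpleGraph

variable {V : Type*} [Fintype V] (G : SimpleGraph V)

theorem containsBook_of_isUniversal {x y : V} (hxy : x ≠ y) (hx : G.IsUniversal x)
    (hy : G.IsUniversal y) : G.ContainsBook (Fintype.card V - 2) := by
  classical
  refine ⟨x, y, hx hxy, le_of_eq ?_⟩
  have : G.commonNeighbors x y = commonNeighbors ⊤ x y := by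
    ext z
    simp only [mem_commonNeighbors, top_adj]
    exact ⟨fun h => ⟨h.1.ne, h.2.ne⟩, fun h => ⟨hx h.1, hy h.2⟩⟩
  rw [this, Set.ncard_eq_toFinset_card', Set.toFinset_card, card_commonNeighbors_top hxy]

variable [DecidableRel G.Adj]

theorem ncard_edgeSet_eq_card_edgeFinset : G.edgeSet.ncard = #G.edgeFinset :=
  Set.ncard_eq_toFinset_card' _

variable {G} in
theorem IsRegularOfDegree.two_mul_card_edgeFinset {d : ℕ} (h : G.IsRegularOfDegree d) :
    2 * #G.edgeFinset = Fintype.card V * d := by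
  rw [← sum_degrees_eq_twice_card_edges, Finset.sum_congr rfl fun v _ => h.degree_eq v,
    Finset.sum_const, Finset.card_univ, smul_eq_mul]

theorem not_containsBook_of_forall_degree_le {p : ℕ} (h : ∀ v, G.degree v ≤ p) :
    ¬ G.ContainsBook p := by
  rintro ⟨x, y, hxy, hcard⟩
  rw [Set.ncard_eq_toFinset_card', Set.toFinset_card] at hcard
  exact (hxy.card_commonNeighbors_lt_degree.trans_le (h x)).not_ge hcard

theorem degree_le_of_not_isUniversal {v : V} (hv : ¬ G.IsUniversal v) :
    G.degree v ≤ Fintype.card V - 2 := by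
  classical
  have hpos : 0 < Gᶜ.degree v := (degree_pos _ _).2 (mt isIsolated_compl_iff_isUniversal.1 hv)
  rw [degree_compl] at hpos
  omega

theorem two_mul_card_edgeFinset_le_of_not_containsBook
    (h : ¬ G.ContainsBook (Fintype.card V - 2)) :
    2 * #G.edgeFinset ≤ Fintype.card V * (Fintype.card V - 2) + 1 := by
  classical
  have hU : #{v | G.IsUniversal v} ≤ 1 := by
    refine Finset.card_le_one.2 fun x hx y hy => by_contra fun hxy => h ?_
    exact G.containsBook_of_isUniversal hxy (Finset.mem_filter.1 hx).2 (Finset.mem_filter.1 hy).2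
  have hdeg (v : V) : G.degree v ≤ Fintype.card V - 2 + if G.IsUniversal v then 1 else 0 := by
    split_ifs with hv
    · have := G.degree_lt_card_verts v
      omega
    · simpa using G.degree_le_of_not_isUniversal hv
  calc 2 * #G.edgeFinset = ∑ v, G.degree v := (sum_degrees_eq_twice_card_edges G).symm
    _ ≤ ∑ v, (Fintype.card V - 2 + if G.IsUniversal v then 1 else 0) :=
      Finset.sum_le_sum fun v _ => hdeg v
    _ = Fintype.card V * (Fintype.card V - 2) + #{v | G.IsUniversal v} := by
      rw [Finset.sum_add_distrib, Finset.sum_const, Finset.sum_boole, Finset.card_univ,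
        smul_eq_mul, Nat.cast_id]
    _ ≤ Fintype.card V * (Fintype.card V - 2) + 1 := by gcongr

end SimpleGraph

def revMatching (n : ℕ) : SimpleGraph (Fin n) :=
  SimpleGraph.fromRel fun i j => j = i.rev

instance (n : ℕ) : DecidableRel (revMatching n).Adj :=
  fun i j => inferInstanceAs (Decidable (i ≠ j ∧ (j = i.rev ∨ i = j.rev)))

theorem revMatching_isRegularOfDegree_one {n : ℕ} (hn : Even n) :
    (revMatching n).IsRegularOfDegree 1 := by
  intro i
  have hrev : i ≠ i.rev := by
    obtain ⟨k, rfl⟩ := hn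
    intro h
    have := congrArg Fin.val h
    rw [Fin.val_rev] at this
    omega
  rw [degree_eq_one_iff_existsUnique_adj]
  refine ⟨i.rev, ⟨hrev, Or.inl rfl⟩, fun j ⟨_, hj⟩ => ?_⟩
  rcases hj with rfl | rfl
  · rfl
  · exact (Fin.rev_rev j).symm

theorem stmt3_general (p : ℕ) (hev : Even p) :
    bookTuranNumber (p + 2) p = p * (p + 2) / 2 := by
  classical
  have hreg : (revMatching (p + 2))ᶜ.IsRegularOfDegree p := by
    have h := (revMatching_isRegularOfDegree_one (hev.add even_two)).compl
    rwa [Fintype.card_fin, show p + 2 - 1 - 1 = p by omega] at h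
  refine IsGreatest.csSup_eq ⟨⟨_, (revMatching (p + 2))ᶜ.not_containsBook_of_forall_degree_le
    fun v => (hreg v).le, ?_⟩, ?_⟩
  · have := hreg.two_mul_card_edgeFinset
    rw [Fintype.card_fin, Nat.mul_comm (p + 2) p] at this
    rw [ncard_edgeSet_eq_card_edgeFinset, ← this, Nat.mul_div_cancel_left _ two_pos]
  · rintro _ ⟨G, hG, rfl⟩
    obtain ⟨m, hm⟩ : Even (p * (p + 2)) := hev.mul_right _
    have := G.two_mul_card_edgeFinset_le_of_not_containsBook (by simpa using hG)
    rw [Fintype.card_fin, Nat.add_sub_cancel, Nat.mul_comm (p + 2) p] at this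
    rw [ncard_edgeSet_eq_card_edgeFinset]
    omega

theorem stmt3 (p : ℕ) (hp : 1 ≤ p) (hev : Even p) :
    bookTuranNumber (p + 2) p = p * (p + 2) / 2 :=
  stmt3_general p hev
end

section
/- Let p be an odd positive integer and let G be a graph of order p+2 not containing B_p with exactly (p+1)^2/2 edges. Then G is isomorphic to the join K_1 ∨ (K_{p+1} − PM). -/
open SimpleGraph

/-! Summing degrees gives `∑ deg = (p + 1)² > (p + 2) p`, so some vertex `u` has degree `p + 1`,
i.e. is adjacent to all others. Without a `B_p`, adjacent `x, y` share at most `p - 1`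
neighbours, so `deg x + deg y ≤ (p + 2) + (p - 1)`; taking `x = u` gives `deg v ≤ p` for `v ≠ u`,
and the degree sum forces equality. Hence every `v ≠ u` misses exactly one other vertex: the
complement of `G - u` is a perfect matching. -/

open Finset

theorem Setoid.exists_equiv_prod_fin {S : Type*} [Finite S] (s : Setoid S) {k : ℕ}
    (hk : ∀ x, Nat.card {y // s x y} = k) :
    ∃ e : S ≃ Quotient s × Fin k, ∀ x, (e x).1 = Quotient.mk s x := by
  have hfiber (q : Quotient s) : Nat.card {x // Quotient.mk s x = q} = k := by
    induction q using Quotient.ind with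
    | _ y => exact (Nat.card_congr (Equiv.subtypeEquivRight fun x ↦ by
        rw [Quotient.eq, s.comm'])).trans (hk y)
  exact ⟨(Equiv.sigmaFiberEquiv (Quotient.mk s)).symm.trans
    ((Equiv.sigmaCongrRight fun q ↦ Finite.equivFinOfCardEq (hfiber q)).trans
      (Equiv.sigmaEquivProd _ _)), fun x ↦ rfl⟩

namespace SimpleGraph

section Iso

variable {V W V' W' : Type*}

def Iso.compl {G : SimpleGraph V} {G' : SimpleGraph V'} (f : G ≃g G') : Gᶜ ≃g G'ᶜ :=
  ⟨f.toEquiv, by simp [f.injective.ne_iff, f.map_adj_iff]⟩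

def Iso.join {G : SimpleGraph V} {G' : SimpleGraph V'} {H : SimpleGraph W} {H' : SimpleGraph W'}
    (f : G ≃g G') (g : H ≃g H') : G.join H ≃g G'.join H' :=
  (f.compl.sumCongr g.compl).compl

def IsUniversal.isoJoin [DecidableEq V] {G : SimpleGraph V} {u : V} (hu : G.IsUniversal u) :
    (completeGraph (Fin 1)).join (G.induce {u}ᶜ) ≃g G where
  toEquiv := (Equiv.sumCongr (Equiv.ofUnique _ _) (Equiv.refl _)).trans (Equiv.Set.sumCompl {u})
  map_rel_iff' := by
    rintro (a | ⟨a, ha : a ≠ u⟩) (b | ⟨b, hb : b ≠ u⟩)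
    · simp [join, Subsingleton.elim a b]
    · simpa [join] using hu hb.symm
    · simpa [join] using (hu ha.symm).symm
    · have : G.Adj a b → a ≠ b := G.ne_of_adj
      simpa [join, Subtype.ext_iff] using ⟨fun h ↦ ⟨this h, fun _ ↦ h⟩, fun h ↦ h.2 h.1⟩

end Iso

section PerfectMatching

variable {S : Type*} {H : SimpleGraph S}

def matchingSetoid (hH : ∀ x, ∃! y, H.Adj x y) : Setoid S where
  r x y := x = y ∨ H.Adj x y
  iseqv := by
    refine ⟨fun x ↦ Or.inl rfl, ?_, ?_⟩
    · rintro x y (rfl | h)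
      exacts [Or.inl rfl, Or.inr h.symm]
    · rintro x y z (rfl | hxy) (rfl | hyz)
      · exact Or.inl rfl
      · exact Or.inr hyz
      · exact Or.inr hxy
      · exact Or.inl ((hH y).unique hxy.symm hyz)

theorem nonempty_iso_unionComplete_two [Fintype S] {m : ℕ} (hcard : Fintype.card S = 2 * m)
    (hH : ∀ x, ∃! y, H.Adj x y) : Nonempty (H ≃g unionComplete m 2) := by
  let s := matchingSetoid hH
  have hclass (x : S) : Nat.card {y // s x y} = 2 := by
    obtain ⟨w, hw, -⟩ := hH x
    have : {y | s x y} = {x, w} := by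
      ext y
      exact or_congr eq_comm ⟨fun h ↦ (hH x).unique h hw, fun h ↦ h ▸ hw⟩
    change Nat.card ({y | s x y} : Set S) = 2
    rw [this, Nat.card_coe_set_eq, Set.ncard_pair (H.ne_of_adj hw)]
  obtain ⟨e, he⟩ := s.exists_equiv_prod_fin hclass
  have hQ : Nat.card (Quotient s) = m := by
    have := Nat.card_congr e
    rw [Nat.card_prod, Nat.card_eq_fintype_card, hcard, Nat.card_fin] at this
    omega
  let φ := e.trans ((Finite.equivFinOfCardEq hQ).prodCongr (Equiv.refl _))
  have hfst (x y : S) : (φ x).1 = (φ y).1 ↔ x = y ∨ H.Adj x y := by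
    simp only [φ, Equiv.trans_apply, Equiv.prodCongr_apply, Prod.map_fst, he,
      EmbeddingLike.apply_eq_iff_eq, Quotient.eq]
    rfl
  refine ⟨⟨φ, fun {a b} ↦ ?_⟩⟩
  simp only [unionComplete, fromRel_adj, φ.injective.ne_iff, hfst]
  grind [H.ne_of_adj, H.symm]

theorem nonempty_iso_compl_unionComplete_two [Fintype S] {m : ℕ}
    (hcard : Fintype.card S = 2 * m) (hH : ∀ x, ∃! y, Hᶜ.Adj x y) :
    Nonempty (H ≃g (unionComplete m 2)ᶜ) := by
  simpa using (nonempty_iso_unionComplete_two hcard hH).map Iso.compl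

end PerfectMatching

section Degrees

variable {V : Type*} [Fintype V] {G : SimpleGraph V} [DecidableRel G.Adj]

theorem exists_isUniversal_of_lt_sum_degree
    (h : Fintype.card V * (Fintype.card V - 2) < ∑ v, G.degree v) : ∃ u, G.IsUniversal u := by
  rw [← smul_eq_mul, ← card_univ, ← sum_const] at h
  obtain ⟨u, -, hu⟩ := exists_lt_of_sum_lt h
  refine ⟨u, (G.degree_eq_card_sub_one u).mp ?_⟩
  have := G.degree_lt_card_verts u
  rw [card_univ] at hu
  omega

variable [DecidableEq V]

theorem degree_add_degree_lt_of_not_containsBook {p : ℕ} (hfree : ¬G.ContainsBook p)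
    {x y : V} (hxy : G.Adj x y) : G.degree x + G.degree y < Fintype.card V + p := by
  have hcommon : #(G.neighborFinset x ∩ G.neighborFinset y) < p := by
    have hbook : ¬p ≤ (G.commonNeighbors x y).ncard := fun h ↦ hfree ⟨x, y, hxy, h⟩
    have : G.commonNeighbors x y = ↑(G.neighborFinset x ∩ G.neighborFinset y) := by
      ext; simp [mem_commonNeighbors]
    rwa [this, Set.ncard_coe_finset, not_le] at hbook
  have hunion := card_le_univ (G.neighborFinset x ∪ G.neighborFinset y)
  rw [← card_neighborFinset_eq_degree, ← card_neighborFinset_eq_degree,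
    ← card_union_add_card_inter]
  omega

theorem degree_le_of_isUniversal {p : ℕ} (hfree : ¬G.ContainsBook p) {u v : V}
    (hu : G.IsUniversal u) (hv : v ≠ u) : G.degree v ≤ p := by
  have := degree_add_degree_lt_of_not_containsBook hfree (hu hv.symm)
  rw [(G.degree_eq_card_sub_one u).mpr hu] at this
  have := Fintype.card_pos_iff.mpr ⟨u⟩
  omega

theorem degree_eq_of_isUniversal_of_sum_degree_eq {p : ℕ} (hfree : ¬G.ContainsBook p) {u : V}
    (hu : G.IsUniversal u) (hsum : ∑ v, G.degree v = (Fintype.card V - 1) * (p + 1)) {v : V}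
    (hv : v ≠ u) : G.degree v = p := by
  have hle (w : V) (hw : w ∈ univ.erase u) : G.degree w ≤ p :=
    degree_le_of_isUniversal hfree hu (ne_of_mem_erase hw)
  have heq : ∑ w ∈ univ.erase u, G.degree w = ∑ w ∈ univ.erase u, p := by
    rw [← add_sum_erase _ _ (mem_univ u), (G.degree_eq_card_sub_one u).mpr hu, mul_add_one]
      at hsum
    rw [sum_const, card_erase_of_mem (mem_univ u), card_univ, smul_eq_mul]
    omega
  exact (sum_eq_sum_iff_of_le hle).mp heq v (mem_erase.mpr ⟨hv, mem_univ v⟩)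

theorem existsUnique_compl_induce_adj {u : V} (hu : G.IsUniversal u)
    (hdeg : ∀ v, v ≠ u → G.degree v + 2 = Fintype.card V) (x : ({u}ᶜ : Set V)) :
    ∃! y, (G.induce {u}ᶜ)ᶜ.Adj x y := by
  obtain ⟨v, hv : v ≠ u⟩ := x
  have hcodeg : Gᶜ.degree v = 1 := by
    rw [degree_compl]
    have := hdeg v hv
    omega
  obtain ⟨w, hvw, hw⟩ := degree_eq_one_iff_existsUnique_adj.mp hcodeg
  have hwu : w ≠ u := by
    rintro rfl
    exact hvw.2 (hu hv.symm).symm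
  refine ⟨⟨w, hwu⟩, ?_, fun y hy ↦ ?_⟩
  · simpa [Subtype.ext_iff] using hvw
  · exact Subtype.ext (hw y (by simpa [Subtype.ext_iff] using hy))

end Degrees

end SimpleGraph

theorem stmt8_general (p : ℕ) (hodd : Odd p) {V : Type*} [Fintype V]
    (hV : Fintype.card V = p + 2) (G : SimpleGraph V) (hfree : ¬ G.ContainsBook p)
    (hsize : G.edgeSet.ncard = (p + 1) ^ 2 / 2) :
    Nonempty (G ≃g SimpleGraph.join (completeGraph (Fin 1))
      (unionComplete ((p + 1) / 2) 2)ᶜ) := by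
  classical
  have hhalf : 2 * ((p + 1) / 2) = p + 1 := Nat.mul_div_cancel' hodd.add_one.two_dvd
  have hsum : ∑ v, G.degree v = (p + 1) ^ 2 := by
    rw [sum_degrees_eq_twice_card_edges, ← Set.ncard_coe_finset, coe_edgeFinset, hsize,
      Nat.mul_div_cancel' (dvd_pow hodd.add_one.two_dvd two_ne_zero)]
  obtain ⟨u, hu⟩ := G.exists_isUniversal_of_lt_sum_degree
    (by rw [hV, hsum, Nat.add_sub_cancel]; nlinarith)
  have hdeg (v : V) (hv : v ≠ u) : G.degree v + 2 = Fintype.card V := by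
    rw [degree_eq_of_isUniversal_of_sum_degree_eq hfree hu (by rw [hsum, hV, sq]; rfl) hv, hV]
  have hcard : Fintype.card ({u}ᶜ : Set V) = 2 * ((p + 1) / 2) := by
    rw [Fintype.card_compl_set, hV, Set.card_singleton]
    omega
  obtain ⟨φ⟩ := nonempty_iso_compl_unionComplete_two hcard (existsUnique_compl_induce_adj hu hdeg)
  exact ⟨hu.isoJoin.symm.trans (Iso.refl.join φ)⟩

theorem stmt8 (p : ℕ) (hp : 1 ≤ p) (hodd : Odd p) {V : Type*} [Fintype V]
    (hV : Fintype.card V = p + 2) (G : SimpleGraph V) (hfree : ¬ G.ContainsBook p)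
    (hsize : G.edgeSet.ncard = (p + 1) ^ 2 / 2) :
    Nonempty (G ≃g SimpleGraph.join (completeGraph (Fin 1))
      (unionComplete ((p + 1) / 2) 2)ᶜ) :=
  stmt8_general p hodd hV G hfree hsize
end

section
/- Let p be an odd positive integer and let G be a graph of order p+3 not containing B_p with exactly (p+1)(p+3)/2 edges. Then G is isomorphic to K_{p+3} minus a perfect matching. -/
open SimpleGraph

/-!
A universal vertex `v` of a `B_p`-free graph forces every other vertex `w` to have degree at most
`p`, since the neighbours of `w` other than `v` are pages on the edge `vw`. On `p + 3` vertices
this leaves at most `(p + 2)(p + 1)` degree sum, fewer than `(p + 1)(p + 3)`, so the maximum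
degree is at most `p + 1`, and the edge count then forces every degree to equal `p + 1`. The
complement is therefore `1`-regular, i.e. a perfect matching, so non-adjacency in `G` is an
equivalence relation with classes of size two, and `G` is the complete equipartite graph with
`(p + 3) / 2` parts of size two.
-/

namespace SimpleGraph

theorem compl_unionComplete (m k : ℕ) : (unionComplete m k)ᶜ = completeEquipartiteGraph m k := by
  ext a b
  simp only [unionComplete, compl_adj, fromRel_adj, completeEquipartiteGraph_adj]
  grind

def Iso.completeMultipartiteGraph {ι ι' : Type*} {V : ι → Type*} {W : ι' → Type*} (e : ι ≃ ι')
    (f : ∀ i, V i ≃ W (e i)) : completeMultipartiteGraph V ≃g completeMultipartiteGraph W where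
  toEquiv := e.sigmaCongr f
  map_rel_iff' := by simp [Equiv.sigmaCongr]

variable {V : Type*} [Fintype V] {G : SimpleGraph V} [DecidableRel G.Adj]

section Book

variable {p : ℕ}

theorem degree_le_of_isUniversal_of_adj (hfree : ¬ G.ContainsBook p) {v w : V}
    (hv : G.IsUniversal v) (hvw : G.Adj v w) : G.degree w ≤ p := by
  classical
  have hsub : (((G.neighborFinset w).erase v : Finset V) : Set V) ⊆ G.commonNeighbors v w := by
    intro x hx
    simp only [Finset.coe_erase, Set.mem_sdiff, Finset.mem_coe, mem_neighborFinset,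
      Set.mem_singleton_iff] at hx
    exact ⟨hv (Ne.symm hx.2), hx.1⟩
  have hpages : ((G.neighborFinset w).erase v).card < p := by
    rw [← Set.ncard_coe_finset]
    exact (Set.ncard_le_ncard hsub).trans_lt (not_le.1 fun h => hfree ⟨v, w, hvw, h⟩)
  rw [Finset.card_erase_of_mem (by simpa using hvw.symm), card_neighborFinset_eq_degree] at hpages
  have : 0 < G.degree w := G.degree_pos_iff_exists_adj w |>.2 ⟨v, hvw.symm⟩
  omega

theorem sum_degrees_le_of_isUniversal (hfree : ¬ G.ContainsBook p) {v : V}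
    (hv : G.IsUniversal v) : ∑ w, G.degree w ≤ (Fintype.card V - 1) * (p + 1) := by
  classical
  have hrest : ∑ w ∈ Finset.univ.erase v, G.degree w ≤ (Fintype.card V - 1) * p := by
    simpa [Finset.card_erase_of_mem] using Finset.sum_le_card_nsmul (Finset.univ.erase v) _ p
      fun w hw => degree_le_of_isUniversal_of_adj hfree hv (hv (Finset.ne_of_mem_erase hw).symm)
  have hv_deg : G.degree v ≤ Fintype.card V - 1 := Nat.le_sub_one_of_lt (G.degree_lt_card_verts v)
  rw [← Finset.add_sum_erase _ _ (Finset.mem_univ v)]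
  linarith [Nat.mul_succ (Fintype.card V - 1) p]

theorem degree_le_card_sub_two_of_not_containsBook (hfree : ¬ G.ContainsBook p)
    (hsum : (Fintype.card V - 1) * (p + 1) < ∑ w, G.degree w) (v : V) :
    G.degree v ≤ Fintype.card V - 2 := by
  have hv : ¬ G.IsUniversal v := fun hv => (sum_degrees_le_of_isUniversal hfree hv).not_gt hsum
  have := (G.degree_lt_card_sub_one v).2 hv
  omega

end Book

theorem isRegularOfDegree_of_sum_degrees_eq {d : ℕ} (hle : ∀ v, G.degree v ≤ d)
    (hsum : ∑ v, G.degree v = Fintype.card V * d) : G.IsRegularOfDegree d := by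
  rw [← smul_eq_mul, ← Finset.card_univ, ← Finset.sum_const,
    Finset.sum_eq_sum_iff_of_le fun v _ => hle v] at hsum
  exact fun v => hsum v (Finset.mem_univ v)

theorem IsCompleteMultipartite.nonempty_iso_completeEquipartiteGraph
    (h : G.IsCompleteMultipartite) {m k : ℕ} (hk : 0 < k)
    (hpart : ∀ v, Fintype.card {w // ¬ G.Adj v w} = k) (hV : Fintype.card V = m * k) :
    Nonempty (G ≃g completeEquipartiteGraph m k) := by
  classical
  have hP : ∀ c : Quotient h.setoid, Fintype.card {x // h.setoid c.out x} = k :=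
    fun c => by convert hpart c.out
  have hQ : Fintype.card (Quotient h.setoid) = m := by
    have hcard := Fintype.card_congr h.iso.toEquiv
    simp only [Fintype.card_sigma, hP, Finset.sum_const, Finset.card_univ, smul_eq_mul, hV] at hcard
    exact (Nat.eq_of_mul_eq_mul_right hk hcard).symm
  exact ⟨h.iso.trans <| (Iso.completeMultipartiteGraph (Fintype.equivFinOfCardEq hQ)
    fun c => Fintype.equivFinOfCardEq (hP c)).trans
      completeEquipartiteGraph.completeMultipartiteGraph.symm⟩

variable [DecidableEq V]

theorem IsRegularOfDegree.isCompleteMultipartite_of_compl (h : Gᶜ.IsRegularOfDegree 1) :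
    G.IsCompleteMultipartite := by
  refine ⟨fun a b c hab hbc => ?_⟩
  obtain rfl | hab' := eq_or_ne a b
  · exact hbc
  obtain rfl | hbc' := eq_or_ne b c
  · exact hab
  have hac : a = c := (degree_eq_one_iff_existsUnique_adj.1 (h b)).unique
    ⟨hab'.symm, fun hba => hab hba.symm⟩ ⟨hbc', hbc⟩
  exact hac ▸ G.irrefl

theorem IsRegularOfDegree.card_not_adj_of_compl (h : Gᶜ.IsRegularOfDegree 1) (v : V) :
    Fintype.card {w // ¬ G.Adj v w} = 2 := by
  have hnonadj : Finset.univ.filter (fun w => ¬ G.Adj v w) = insert v (Gᶜ.neighborFinset v) := by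
    ext w
    obtain rfl | hvw := eq_or_ne v w <;> simp [*, Ne.symm]
  rw [Fintype.card_subtype, hnonadj, Finset.card_insert_of_notMem (notMem_neighborFinset_self _ _),
    card_neighborFinset_eq_degree, h v]

end SimpleGraph

theorem stmt9_general (p : ℕ) (hodd : Odd p) {V : Type*} [Fintype V]
    (hV : Fintype.card V = p + 3) (G : SimpleGraph V) (hfree : ¬ G.ContainsBook p)
    (hsize : G.edgeSet.ncard = (p + 1) * (p + 3) / 2) :
    Nonempty (G ≃g (unionComplete ((p + 3) / 2) 2)ᶜ) := by
  classical
  have hsum : ∑ v, G.degree v = (p + 1) * (p + 3) := by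
    rw [sum_degrees_eq_twice_card_edges, ← Set.ncard_coe_finset, coe_edgeFinset, hsize,
      Nat.mul_div_cancel' ((hodd.add_odd (by decide : Odd 3)).mul_left _).two_dvd]
  have hreg : G.IsRegularOfDegree (p + 1) := by
    refine isRegularOfDegree_of_sum_degrees_eq (fun v => ?_) (by rw [hsum, hV, mul_comm])
    have hsum_gt : (Fintype.card V - 1) * (p + 1) < ∑ v, G.degree v := by
      rw [hsum, hV]
      show (p + 2) * (p + 1) < (p + 1) * (p + 3)
      nlinarith
    simpa [hV] using degree_le_card_sub_two_of_not_containsBook hfree hsum_gt v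
  have hcompl : Gᶜ.IsRegularOfDegree 1 := by simpa [hV] using hreg.compl
  rw [compl_unionComplete]
  exact hcompl.isCompleteMultipartite_of_compl.nonempty_iso_completeEquipartiteGraph two_pos
    hcompl.card_not_adj_of_compl (by obtain ⟨m, rfl⟩ := hodd; omega)

theorem stmt9 (p : ℕ) (hp : 1 ≤ p) (hodd : Odd p) {V : Type*} [Fintype V]
    (hV : Fintype.card V = p + 3) (G : SimpleGraph V) (hfree : ¬ G.ContainsBook p)
    (hsize : G.edgeSet.ncard = (p + 1) * (p + 3) / 2) :
    Nonempty (G ≃g (unionComplete ((p + 3) / 2) 2)ᶜ) :=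
  stmt9_general p hodd hV G hfree hsize
end

section
/- For every integer p ≥ 3, the Turán number ex(p+4, B_p) equals (p+2)(p+3)/2. -/
open SimpleGraph

namespace BookAux
open Finset


def nxt (p k : ℕ) : ℕ := if k = p + 1 then 0 else k + 1
def pre (p k : ℕ) : ℕ := if k = 0 then p + 1 else k - 1

lemma nxt_lt (p k : ℕ) (h : k < p + 2) : nxt p k < p + 2 := by unfold nxt; split_ifs <;> omega
lemma pre_lt (p k : ℕ) (h : k < p + 2) : pre p k < p + 2 := by unfold pre; split_ifs <;> omega

def Hrel (p : ℕ) (a b : Fin (p + 4)) : Prop :=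
  (a.val < p + 2 ∧ b.val < p + 2 ∧ b.val = nxt p a.val) ∨ (a.val = p + 2 ∧ b.val = p + 3)

def HG (p : ℕ) : SimpleGraph (Fin (p + 4)) := SimpleGraph.fromRel (Hrel p)

lemma HG_adj_lt (p : ℕ) (hp : 3 ≤ p) (a b : Fin (p + 4)) (ha : a.val < p + 2) :
    (HG p).Adj a b ↔ b.val = nxt p a.val ∨ b.val = pre p a.val := by
  simp only [HG, fromRel_adj, Hrel, nxt, pre, ne_eq, Fin.ext_iff]
  split_ifs <;> omega

lemma HG_adj_p2 (p : ℕ) (a b : Fin (p + 4)) (ha : a.val = p + 2) :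
    (HG p).Adj a b ↔ b.val = p + 3 := by
  simp only [HG, fromRel_adj, Hrel, nxt, pre, ne_eq, Fin.ext_iff]
  split_ifs <;> omega

lemma HG_adj_p3 (p : ℕ) (a b : Fin (p + 4)) (ha : a.val = p + 3) :
    (HG p).Adj a b ↔ b.val = p + 2 := by
  simp only [HG, fromRel_adj, Hrel, nxt, pre, ne_eq, Fin.ext_iff]
  split_ifs <;> omega

lemma key_nat (p a b : ℕ) (hp : 3 ≤ p) (ha : a < p + 2) (hb : b < p + 2) (hab : a ≠ b)
    (h1 : b ≠ nxt p a) (h2 : b ≠ pre p a) :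
    ∃ c, (c = nxt p b ∨ c = pre p b) ∧ c < p + 2 ∧ c ≠ a ∧ c ≠ b ∧ c ≠ nxt p a ∧
      c ≠ pre p a := by
  by_cases h : nxt p b = pre p a
  · refine ⟨pre p b, Or.inr rfl, ?_⟩
    simp only [nxt, pre] at *
    split_ifs at * <;> omega
  · refine ⟨nxt p b, Or.inl rfl, ?_⟩
    simp only [nxt, pre] at *
    split_ifs at * <;> omega

lemma nxt_pre_ne (p a : ℕ) (hp : 3 ≤ p) (ha : a < p + 2) :
    nxt p a ≠ a ∧ pre p a ≠ a ∧ nxt p a ≠ pre p a := by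
  simp only [nxt, pre]; split_ifs <;> omega

lemma exists_triple (p : ℕ) (hp : 3 ≤ p) {x y : Fin (p + 4)} (hne : x ≠ y)
    (hnadj : ¬ (HG p).Adj x y) :
    ∃ z1 z2 z3 : Fin (p + 4),
      x ≠ z1 ∧ x ≠ z2 ∧ x ≠ z3 ∧ y ≠ z1 ∧ y ≠ z2 ∧ y ≠ z3 ∧ z1 ≠ z2 ∧ z1 ≠ z3 ∧ z2 ≠ z3 ∧
      ((HG p).Adj x z1 ∨ (HG p).Adj y z1) ∧ ((HG p).Adj x z2 ∨ (HG p).Adj y z2) ∧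
      ((HG p).Adj x z3 ∨ (HG p).Adj y z3) := by
  -- main case builder for x.val < p + 2
  have main : ∀ x y : Fin (p + 4), x.val < p + 2 → x ≠ y → ¬ (HG p).Adj x y →
      ∃ z1 z2 z3 : Fin (p + 4),
      x ≠ z1 ∧ x ≠ z2 ∧ x ≠ z3 ∧ y ≠ z1 ∧ y ≠ z2 ∧ y ≠ z3 ∧ z1 ≠ z2 ∧ z1 ≠ z3 ∧ z2 ≠ z3 ∧
      ((HG p).Adj x z1 ∨ (HG p).Adj y z1) ∧ ((HG p).Adj x z2 ∨ (HG p).Adj y z2) ∧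
      ((HG p).Adj x z3 ∨ (HG p).Adj y z3) := by
    intro x y hx hne hnadj
    have hfin : ∀ a b : Fin (p + 4), a ≠ b ↔ a.val ≠ b.val := by
      intro a b; simp [Fin.ext_iff]
    obtain ⟨hnx, hpx, hnpx⟩ := nxt_pre_ne p x.val hp hx
    have hnl := nxt_lt p x.val hx
    have hpl := pre_lt p x.val hx
    set z1 : Fin (p + 4) := ⟨nxt p x.val, by omega⟩ with hz1
    set z2 : Fin (p + 4) := ⟨pre p x.val, by omega⟩ with hz2
    have haz1 : (HG p).Adj x z1 := (HG_adj_lt p hp x z1 hx).mpr (Or.inl rfl)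
    have haz2 : (HG p).Adj x z2 := (HG_adj_lt p hp x z2 hx).mpr (Or.inr rfl)
    by_cases hy : y.val < p + 2
    · have hny : ¬(y.val = nxt p x.val ∨ y.val = pre p x.val) := by
        intro h; exact hnadj ((HG_adj_lt p hp x y hx).mpr h)
      push_neg at hny
      obtain ⟨c, hc, hcl, hca, hcb, hcn, hcp⟩ :=
        key_nat p x.val y.val hp hx hy ((hfin x y).mp hne) hny.1 hny.2
      refine ⟨z1, z2, ⟨c, by omega⟩, ?_, ?_, ?_, ?_, ?_, ?_, ?_, ?_, ?_,
        Or.inl haz1, Or.inl haz2, Or.inr ((HG_adj_lt p hp y _ hy).mpr (by simpa using hc))⟩ <;>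
        simp only [hfin, hz1, hz2] <;> omega
    · have hy' : y.val = p + 2 ∨ y.val = p + 3 := by have := y.isLt; omega
      have hz1y : z1.val < p + 2 := hnl
      rcases hy' with h2 | h3
      · refine ⟨z1, z2, ⟨p + 3, by omega⟩, ?_, ?_, ?_, ?_, ?_, ?_, ?_, ?_, ?_,
          Or.inl haz1, Or.inl haz2, Or.inr ((HG_adj_p2 p y _ h2).mpr rfl)⟩ <;>
          simp only [hfin, hz1, hz2] <;> omega
      · refine ⟨z1, z2, ⟨p + 2, by omega⟩, ?_, ?_, ?_, ?_, ?_, ?_, ?_, ?_, ?_,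
          Or.inl haz1, Or.inl haz2, Or.inr ((HG_adj_p3 p y _ h3).mpr rfl)⟩ <;>
          simp only [hfin, hz1, hz2] <;> omega
  by_cases hx : x.val < p + 2
  · exact main x y hx hne hnadj
  by_cases hy : y.val < p + 2
  · obtain ⟨z1, z2, z3, a1, a2, a3, b1, b2, b3, c1, c2, c3, d1, d2, d3⟩ :=
      main y x hy hne.symm (fun h => hnadj h.symm)
    exact ⟨z1, z2, z3, b1, b2, b3, a1, a2, a3, c1, c2, c3, d1.symm, d2.symm, d3.symm⟩
  · exfalso
    have hx' : x.val = p + 2 ∨ x.val = p + 3 := by have := x.isLt; omega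
    have hy' : y.val = p + 2 ∨ y.val = p + 3 := by have := y.isLt; omega
    have hne' : x.val ≠ y.val := fun h => hne (Fin.ext h)
    rcases hx' with h2 | h3
    · exact hnadj ((HG_adj_p2 p x y h2).mpr (by omega))
    · exact hnadj ((HG_adj_p3 p x y h3).mpr (by omega))

lemma notContainsBook (p : ℕ) (hp : 3 ≤ p) : ¬ ((HG p)ᶜ).ContainsBook p := by
  rintro ⟨x, y, hadj, hcard⟩
  rw [compl_adj] at hadj
  obtain ⟨hne, hnadj⟩ := hadj
  obtain ⟨z1, z2, z3, a1, a2, a3, b1, b2, b3, c1, c2, c3, d1, d2, d3⟩ := exists_triple p hp hne hnadj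
  classical
  set S : Finset (Fin (p + 4)) := {x, y, z1, z2, z3} with hS
  have hScard : S.card = 5 := by
    rw [hS]
    rw [Finset.card_insert_of_notMem (by simp [hne, a1, a2, a3]),
      Finset.card_insert_of_notMem (by simp [b1, b2, b3]),
      Finset.card_insert_of_notMem (by simp [c1, c2]),
      Finset.card_insert_of_notMem (by simp [c3]), Finset.card_singleton]
  have hsub : ((HG p)ᶜ).commonNeighbors x y ⊆ ↑(Finset.univ \ S) := by
    intro z hz
    obtain ⟨hzx, hzy⟩ := hz
    simp only [mem_neighborSet, compl_adj] at hzx hzy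
    simp only [Finset.coe_sdiff, Finset.coe_univ, Set.mem_diff, Set.mem_univ, true_and,
      Finset.mem_coe, hS, Finset.mem_insert, Finset.mem_singleton]
    push_neg
    refine ⟨fun h => hzx.1 h.symm, fun h => hzy.1 h.symm, ?_, ?_, ?_⟩ <;>
      rintro rfl <;>
      [rcases d1 with h | h; rcases d2 with h | h; rcases d3 with h | h] <;>
      first
        | exact hzx.2 h
        | exact hzy.2 h
  have hle := Set.ncard_le_ncard hsub (Set.toFinite _)
  rw [Set.ncard_coe_finset, Finset.card_sdiff_of_subset (Finset.subset_univ S), Finset.card_univ,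
    Fintype.card_fin, hScard] at hle
  omega

variable (p : ℕ)

open scoped Classical in
lemma HG_degree (hp : 3 ≤ p) (a : Fin (p + 4)) :
    (HG p).degree a = if a.val < p + 2 then 2 else 1 := by
  classical
  rw [degree]
  split_ifs with h
  · have : (HG p).neighborFinset a =
        {⟨nxt p a.val, by have := nxt_lt p a.val h; omega⟩,
         ⟨pre p a.val, by have := pre_lt p a.val h; omega⟩} := by
      ext b
      simp only [mem_neighborFinset, HG_adj_lt p hp a b h, Finset.mem_insert,
        Finset.mem_singleton, Fin.ext_iff]
    rw [this]
    rw [Finset.card_pair]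
    simp only [ne_eq, Fin.ext_iff]
    unfold nxt pre; split_ifs <;> omega
  · rcases (by omega : a.val = p + 2 ∨ a.val = p + 3) with h2 | h3
    · have : (HG p).neighborFinset a = {⟨p + 3, by omega⟩} := by
        ext b
        simp only [mem_neighborFinset, HG_adj_p2 p a b h2, Finset.mem_singleton, Fin.ext_iff]
      rw [this, Finset.card_singleton]
    · have : (HG p).neighborFinset a = {⟨p + 2, by omega⟩} := by
        ext b
        simp only [mem_neighborFinset, HG_adj_p3 p a b h3, Finset.mem_singleton, Fin.ext_iff]
      rw [this, Finset.card_singleton]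

open scoped Classical in
lemma HG_sum_deg (hp : 3 ≤ p) : ∑ a : Fin (p + 4), (HG p).degree a = 2 * p + 6 := by
  classical
  have h1 : ∑ a : Fin (p + 4), (HG p).degree a
      = ∑ k ∈ Finset.range (p + 4), (if k < p + 2 then 2 else 1) := by
    rw [← Fin.sum_univ_eq_sum_range (fun k => if k < p + 2 then 2 else 1) (p + 4)]
    exact Finset.sum_congr rfl fun a _ => HG_degree p hp a
  rw [h1, Finset.sum_range_succ, Finset.sum_range_succ]
  have h2 : ∑ k ∈ Finset.range (p + 2), (if k < p + 2 then 2 else 1) = 2 * (p + 2) := by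
    rw [Finset.sum_congr rfl (fun k hk => if_pos (Finset.mem_range.mp hk)),
      Finset.sum_const, smul_eq_mul, Finset.card_range, mul_comm]
  rw [h2]
  split_ifs <;> omega

open scoped Classical in
lemma GG_card_edges (hp : 3 ≤ p) :
    ((HG p)ᶜ).edgeFinset.card = (p + 2) * (p + 3) / 2 := by
  classical
  have hsum : ∑ a : Fin (p + 4), ((HG p)ᶜ).degree a = (p + 2) * (p + 3) := by
    have h1 : ∀ a : Fin (p + 4), ((HG p)ᶜ).degree a + (HG p).degree a = p + 3 := by
      intro a
      rw [degree_compl]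
      have hd := HG_degree p hp a
      have : (HG p).degree a ≤ 2 := by rw [hd]; split_ifs <;> omega
      simp only [Fintype.card_fin]
      omega
    have := Finset.sum_congr rfl (fun a (_ : a ∈ Finset.univ) => h1 a)
    rw [Finset.sum_add_distrib, HG_sum_deg p hp, Finset.sum_const, Finset.card_univ,
      Fintype.card_fin, smul_eq_mul] at this
    have hexp : (p + 4) * (p + 3) = (p + 2) * (p + 3) + (2 * p + 6) := by ring
    omega
  have h2 := ((HG p)ᶜ).sum_degrees_eq_twice_card_edges
  rw [hsum] at h2
  have heven : 2 * ((p + 2) * (p + 3) / 2) = (p + 2) * (p + 3) := by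
    rw [Nat.mul_div_cancel']
    exact even_iff_two_dvd.mp (Nat.even_mul_succ_self (p + 2))
  omega



open scoped Classical in
lemma upper_bound (p : ℕ) (hp : 3 ≤ p) (G : SimpleGraph (Fin (p + 4)))
    (hG : ¬ G.ContainsBook p) : G.edgeFinset.card ≤ (p + 2) * (p + 3) / 2 := by
  classical
  by_contra hcard
  push_neg at hcard
  -- degree sum of the complement is small
  have hdegsum : ∑ v : Fin (p + 4), Gᶜ.degree v ≤ 2 * p + 4 := by
    have h1 : ∀ v : Fin (p + 4), Gᶜ.degree v + G.degree v = p + 3 := by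
      intro v
      rw [degree_compl]
      have : G.degree v < Fintype.card (Fin (p + 4)) := G.degree_lt_card_verts v
      simp only [Fintype.card_fin] at *
      omega
    have h2 : ∑ v : Fin (p + 4), (Gᶜ.degree v + G.degree v) = (p + 4) * (p + 3) := by
      rw [Finset.sum_congr rfl (fun v _ => h1 v), Finset.sum_const, Finset.card_univ,
        Fintype.card_fin, smul_eq_mul]
    rw [Finset.sum_add_distrib] at h2
    have h3 := G.sum_degrees_eq_twice_card_edges
    have heven : 2 * ((p + 2) * (p + 3) / 2) = (p + 2) * (p + 3) := by
      rw [Nat.mul_div_cancel']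
      exact even_iff_two_dvd.mp (Nat.even_mul_succ_self (p + 2))
    have hexp : (p + 4) * (p + 3) = (p + 2) * (p + 3) + (2 * p + 6) := by ring
    omega
  -- find two nonadjacent (in Gᶜ) vertices of complement-degree ≤ 1
  have hpair : ∃ x y : Fin (p + 4), x ≠ y ∧ ¬ Gᶜ.Adj x y ∧
      Gᶜ.degree x ≤ 1 ∧ Gᶜ.degree y ≤ 1 := by
    by_contra hno
    push_neg at hno
    set L : Finset (Fin (p + 4)) := Finset.univ.filter (fun v => Gᶜ.degree v ≤ 1) with hL
    have hLsum : ∀ s : Finset (Fin (p + 4)), (∀ v ∈ s, 2 ≤ Gᶜ.degree v) →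
        2 * s.card ≤ ∑ v : Fin (p + 4), Gᶜ.degree v := by
      intro s hs
      calc 2 * s.card = ∑ _v ∈ s, 2 := by rw [Finset.sum_const, smul_eq_mul, mul_comm]
        _ ≤ ∑ v ∈ s, Gᶜ.degree v := Finset.sum_le_sum hs
        _ ≤ ∑ v : Fin (p + 4), Gᶜ.degree v :=
            Finset.sum_le_sum_of_subset (Finset.subset_univ s)
    have hcompl : ∀ v ∈ Finset.univ \ L, 2 ≤ Gᶜ.degree v := by
      intro v hv
      simp only [hL, Finset.mem_sdiff, Finset.mem_filter, Finset.mem_univ, true_and] at hv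
      omega
    have hLle : L.card ≤ p + 4 := by simpa using Finset.card_le_univ L
    have hsdcard : (Finset.univ \ L).card = p + 4 - L.card := by
      rw [Finset.card_sdiff_of_subset (Finset.subset_univ L), Finset.card_univ, Fintype.card_fin]
    have hcardL : 2 ≤ L.card := by
      by_contra hL2
      push_neg at hL2
      have := hLsum (Finset.univ \ L) hcompl
      rw [hsdcard] at this
      omega
    obtain ⟨x, hxL, y, hyL, hxy⟩ := Finset.one_lt_card.mp (show 1 < L.card by omega)
    have hdx : Gᶜ.degree x ≤ 1 := (Finset.mem_filter.mp hxL).2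
    have hdy : Gᶜ.degree y ≤ 1 := (Finset.mem_filter.mp hyL).2
    have hadjxy : Gᶜ.Adj x y := by
      by_contra hna; have := hno x y hxy hna hdx; omega
    by_cases hL3 : 3 ≤ L.card
    · -- a third vertex z in L gives degree x ≥ 2
      have hnz : (L \ {x, y}).Nonempty := by
        rw [← Finset.card_pos]
        have h1 := Finset.le_card_sdiff ({x, y} : Finset (Fin (p + 4))) L
        have h2 : ({x, y} : Finset (Fin (p + 4))).card = 2 := Finset.card_pair hxy
        omega
      obtain ⟨z, hz⟩ := hnz
      simp only [Finset.mem_sdiff, Finset.mem_insert, Finset.mem_singleton] at hz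
      push_neg at hz
      obtain ⟨hzL, hzx, hzy⟩ := hz
      have hdz : Gᶜ.degree z ≤ 1 := (Finset.mem_filter.mp hzL).2
      have hadjxz : Gᶜ.Adj x z := by
        by_contra hna; have := hno x z (Ne.symm hzx) hna hdx; omega
      have : ({y, z} : Finset (Fin (p + 4))) ⊆ Gᶜ.neighborFinset x := by
        intro w hw
        simp only [Finset.mem_insert, Finset.mem_singleton] at hw
        rcases hw with rfl | rfl <;> rw [mem_neighborFinset] <;> assumption
      have h2 := Finset.card_le_card this
      rw [Finset.card_pair (fun h => hzy (h.symm))] at h2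
      rw [← card_neighborFinset_eq_degree] at hdx
      omega
    · -- L has exactly two elements
      have hLeq : L = {x, y} := by
        apply (Finset.eq_of_subset_of_card_le _ _).symm
        · intro v hv
          simp only [Finset.mem_insert, Finset.mem_singleton] at hv
          rcases hv with rfl | rfl <;> assumption
        · rw [Finset.card_pair hxy]; omega
      have hsplit : ∑ v ∈ Finset.univ \ ({x, y} : Finset (Fin (p + 4))), Gᶜ.degree v
          + ∑ v ∈ ({x, y} : Finset (Fin (p + 4))), Gᶜ.degree v
          = ∑ v : Fin (p + 4), Gᶜ.degree v :=
        Finset.sum_sdiff (Finset.subset_univ _)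
      have hLsum2 : ∑ v ∈ ({x, y} : Finset (Fin (p + 4))), Gᶜ.degree v
          = Gᶜ.degree x + Gᶜ.degree y := Finset.sum_pair hxy
      have hcc : (Finset.univ \ ({x, y} : Finset (Fin (p + 4)))).card = p + 2 := by
        rw [Finset.card_sdiff_of_subset (Finset.subset_univ _), Finset.card_univ, Fintype.card_fin,
          Finset.card_pair hxy]
        omega
      have h2c : 2 * (Finset.univ \ ({x, y} : Finset (Fin (p + 4)))).card
          ≤ ∑ v ∈ Finset.univ \ ({x, y} : Finset (Fin (p + 4))), Gᶜ.degree v := by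
        calc 2 * (Finset.univ \ ({x, y} : Finset (Fin (p + 4)))).card
            = ∑ _v ∈ Finset.univ \ ({x, y} : Finset (Fin (p + 4))), 2 := by
              rw [Finset.sum_const, smul_eq_mul, mul_comm]
          _ ≤ _ := Finset.sum_le_sum (fun v hv => hcompl v (by rw [hLeq]; exact hv))
      rw [hcc] at h2c
      have hdx1 : 0 < Gᶜ.degree x := (degree_pos_iff_exists_adj _ _).mpr ⟨y, hadjxy⟩
      have hdy1 : 0 < Gᶜ.degree y := (degree_pos_iff_exists_adj _ _).mpr ⟨x, hadjxy.symm⟩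
      omega
  obtain ⟨x, y, hxy, hnadj, hdx, hdy⟩ := hpair
  rw [compl_adj, not_and, not_not] at hnadj
  have hadj : G.Adj x y := hnadj hxy
  -- x and y have at least p common neighbours
  set T : Finset (Fin (p + 4)) :=
    insert x (insert y (Gᶜ.neighborFinset x ∪ Gᶜ.neighborFinset y)) with hT
  have hTcard : T.card ≤ 4 := by
    calc T.card ≤ (insert y (Gᶜ.neighborFinset x ∪ Gᶜ.neighborFinset y)).card + 1 :=
          Finset.card_insert_le _ _
      _ ≤ (Gᶜ.neighborFinset x ∪ Gᶜ.neighborFinset y).card + 2 := by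
          have := Finset.card_insert_le y (Gᶜ.neighborFinset x ∪ Gᶜ.neighborFinset y)
          omega
      _ ≤ (Gᶜ.neighborFinset x).card + (Gᶜ.neighborFinset y).card + 2 := by
          have := Finset.card_union_le (Gᶜ.neighborFinset x) (Gᶜ.neighborFinset y)
          omega
      _ ≤ 4 := by
          rw [card_neighborFinset_eq_degree, card_neighborFinset_eq_degree]
          omega
  have hsub : ↑(Finset.univ \ T) ⊆ G.commonNeighbors x y := by
    intro z hz
    simp only [Finset.coe_sdiff, Finset.coe_univ, Set.mem_diff, Set.mem_univ, true_and,
      Finset.mem_coe, hT, Finset.mem_insert, Finset.mem_union, mem_neighborFinset] at hz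
    push_neg at hz
    obtain ⟨hzx, hzy, hnx, hny⟩ := hz
    constructor
    · simp only [mem_neighborSet]
      rw [compl_adj, not_and, not_not] at hnx
      exact hnx (fun h => hzx h.symm)
    · simp only [mem_neighborSet]
      rw [compl_adj, not_and, not_not] at hny
      exact hny (fun h => hzy h.symm)
  have hge : p ≤ (G.commonNeighbors x y).ncard := by
    have h1 := Set.ncard_le_ncard hsub (Set.toFinite _)
    rw [Set.ncard_coe_finset, Finset.card_sdiff_of_subset (Finset.subset_univ T), Finset.card_univ,
      Fintype.card_fin] at h1
    omega
  exact hG ⟨x, y, hadj, hge⟩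


open scoped Classical in
lemma edgeGraph_count (p : ℕ) (hp : 3 ≤ p) :
    ((HG p)ᶜ).edgeSet.ncard = (p + 2) * (p + 3) / 2 := by
  classical
  rw [← SimpleGraph.coe_edgeFinset, Set.ncard_coe_finset]
  exact GG_card_edges p hp

lemma upper_bound' (p : ℕ) (hp : 3 ≤ p) (G : SimpleGraph (Fin (p + 4)))
    (hG : ¬ G.ContainsBook p) : G.edgeSet.ncard ≤ (p + 2) * (p + 3) / 2 := by
  classical
  rw [← SimpleGraph.coe_edgeFinset, Set.ncard_coe_finset]
  exact upper_bound p hp G hG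

end BookAux

theorem stmt11 (p : ℕ) (hp : 3 ≤ p) :
    bookTuranNumber (p + 4) p = (p + 2) * (p + 3) / 2 := by
  classical
  have hmem : (p + 2) * (p + 3) / 2 ∈
      {e : ℕ | ∃ G : SimpleGraph (Fin (p + 4)), ¬ G.ContainsBook p ∧ G.edgeSet.ncard = e} :=
    ⟨(BookAux.HG p)ᶜ, BookAux.notContainsBook p hp, BookAux.edgeGraph_count p hp⟩
  apply le_antisymm
  · apply csSup_le ⟨_, hmem⟩
    rintro e ⟨G, hG, rfl⟩
    exact BookAux.upper_bound' p hp G hG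
  · apply le_csSup _ hmem
    refine ⟨(p + 2) * (p + 3) / 2, ?_⟩
    rintro e ⟨G, hG, rfl⟩
    exact BookAux.upper_bound' p hp G hG
end

section
/- For every integer p ≥ 3, the graph that is the complement of K_2 + C_{p+2} (the disjoint union of an edge and a cycle of length p+2) has order p+4, has (p+2)(p+3)/2 edges, and does not contain the book B_p as a subgraph. -/
open SimpleGraph

/-!
For a graph `H`, the common neighbours of an edge `xy` of `Hᶜ` are exactly the vertices outside
`N_H[x] ∪ N_H[y]`. For `H = K₂ + C_{p+2}` and non-adjacent `x ≠ y`, the degrees of `x` and `y` sum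
to at least 3, and the closed neighbourhoods meet in at most one vertex because a cycle of length
at least 5 has no `C₄`; so `N_H[x] ∪ N_H[y]` has at least 5 of the `p + 4` vertices and `xy` lies in
at most `p - 1` triangles. The edge count is `C(p + 4, 2) - (p + 3)`.
-/

open scoped Fin.CommRing

namespace SimpleGraph

variable {V W : Type*} (G : SimpleGraph V) (H : SimpleGraph W)

lemma commonNeighbors_compl (x y : V) :
    Gᶜ.commonNeighbors x y = (insert x (G.neighborSet x) ∪ insert y (G.neighborSet y))ᶜ := by
  ext z
  simp only [mem_commonNeighbors, compl_adj, Set.mem_compl_iff, Set.mem_union, Set.mem_insert_iff,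
    mem_neighborSet, not_or, ne_comm (a := z)]

lemma commonNeighbors_eq_insert_inter_insert {x y : V} (hxy : x ≠ y) (h : ¬G.Adj x y) :
    G.commonNeighbors x y = insert x (G.neighborSet x) ∩ insert y (G.neighborSet y) := by
  ext z
  simp only [mem_commonNeighbors, Set.mem_inter_iff, Set.mem_insert_iff, mem_neighborSet]
  constructor
  · rintro ⟨hxz, hyz⟩
    exact ⟨.inr hxz, .inr hyz⟩
  · rintro ⟨rfl | hxz, rfl | hyz⟩
    exacts [absurd rfl hxy, absurd hyz.symm h, absurd hxz h, ⟨hxz, hyz⟩]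

lemma ncard_commonNeighbors_compl_add [Finite V] {x y : V} (hxy : x ≠ y) (h : ¬G.Adj x y) :
    (Gᶜ.commonNeighbors x y).ncard + (G.neighborSet x).ncard + (G.neighborSet y).ncard + 2 =
      Nat.card V + (G.commonNeighbors x y).ncard := by
  have hx := Set.ncard_insert_of_notMem (G.notMem_neighborSet_self (a := x)) (Set.toFinite _)
  have hy := Set.ncard_insert_of_notMem (G.notMem_neighborSet_self (a := y)) (Set.toFinite _)
  have hunion := Set.ncard_union_add_ncard_inter (insert x (G.neighborSet x))
    (insert y (G.neighborSet y)) (Set.toFinite _) (Set.toFinite _)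
  have hcompl := Set.ncard_add_ncard_compl
    (insert x (G.neighborSet x) ∪ insert y (G.neighborSet y))
  rw [commonNeighbors_compl, commonNeighbors_eq_insert_inter_insert G hxy h]
  omega

lemma not_containsBook_compl [Finite V] {p : ℕ}
    (h : ∀ x y, x ≠ y → ¬G.Adj x y → Nat.card V + (G.commonNeighbors x y).ncard <
      p + (G.neighborSet x).ncard + (G.neighborSet y).ncard + 2) :
    ¬Gᶜ.ContainsBook p := by
  rintro ⟨x, y, hadj, hbook⟩
  rw [compl_adj] at hadj
  have := G.ncard_commonNeighbors_compl_add hadj.1 hadj.2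
  have := h x y hadj.1 hadj.2
  omega

lemma two_mul_ncard_edgeSet [Fintype V] : 2 * G.edgeSet.ncard = ∑ v, (G.neighborSet v).ncard := by
  classical
  rw [← coe_edgeFinset, Set.ncard_coe_finset, ← sum_degrees_eq_twice_card_edges]
  simp only [← card_neighborSet_eq_degree, ← Nat.card_eq_fintype_card, Nat.card_coe_set_eq]

lemma ncard_edgeSet_completeGraph [Finite V] :
    (completeGraph V).edgeSet.ncard = (Nat.card V).choose 2 := by
  have : Fintype V := Fintype.ofFinite V
  classical
  rw [← coe_edgeFinset, Set.ncard_coe_finset, Nat.card_eq_fintype_card]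
  exact card_edgeFinset_top_eq_card_choose_two

lemma ncard_edgeSet_compl_add [Finite V] :
    Gᶜ.edgeSet.ncard + G.edgeSet.ncard = (Nat.card V).choose 2 := by
  rw [add_comm, ← Set.ncard_union_eq (disjoint_edgeSet.mpr disjoint_compl_right), ← edgeSet_sup,
    sup_compl_eq_top, ← ncard_edgeSet_completeGraph]

lemma ncard_neighborSet_sum_inl (v : V) :
    ((G ⊕g H).neighborSet (.inl v)).ncard = (G.neighborSet v).ncard := by
  rw [neighborSet_sum_inl, Set.ncard_image_of_injective _ Sum.inl_injective]

lemma ncard_neighborSet_sum_inr (w : W) :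
    ((G ⊕g H).neighborSet (.inr w)).ncard = (H.neighborSet w).ncard := by
  rw [neighborSet_sum_inr, Set.ncard_image_of_injective _ Sum.inr_injective]

lemma ncard_edgeSet_sum [Fintype V] [Fintype W] :
    (G ⊕g H).edgeSet.ncard = G.edgeSet.ncard + H.edgeSet.ncard := by
  have h := (G ⊕g H).two_mul_ncard_edgeSet
  rw [Fintype.sum_sum_type] at h
  simp only [ncard_neighborSet_sum_inl, ncard_neighborSet_sum_inr, ← two_mul_ncard_edgeSet] at h
  omega

lemma commonNeighbors_sum_inl_inr (v : V) (w : W) :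
    (G ⊕g H).commonNeighbors (.inl v) (.inr w) = ∅ := by
  ext (_ | _) <;> simp [mem_commonNeighbors]

lemma commonNeighbors_sum_inr (v w : W) :
    (G ⊕g H).commonNeighbors (.inr v) (.inr w) = Sum.inr '' H.commonNeighbors v w := by
  rw [commonNeighbors_eq, commonNeighbors_eq, neighborSet_sum_inr, neighborSet_sum_inr,
    Set.image_inter Sum.inr_injective]

lemma ncard_neighborSet_completeGraph [Finite V] (v : V) :
    ((completeGraph V).neighborSet v).ncard = Nat.card V - 1 := by
  rw [completeGraph, neighborSet_top, Set.ncard_compl, Set.ncard_singleton]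

lemma ncard_neighborSet_cycleGraph {n : ℕ} (hn : 1 ≤ n) (v : Fin (n + 2)) :
    ((cycleGraph (n + 2)).neighborSet v).ncard = 2 := by
  have h2 : (2 : Fin (n + 2)) ≠ 0 := by
    simp [Fin.ext_iff, Nat.mod_eq_of_lt (show 2 < n + 2 by omega)]
  rw [cycleGraph_neighborSet, Set.ncard_pair]
  intro h
  exact h2 (by linear_combination -h)

lemma ncard_edgeSet_cycleGraph {n : ℕ} (hn : 1 ≤ n) :
    (cycleGraph (n + 2)).edgeSet.ncard = n + 2 := by
  have h := (cycleGraph (n + 2)).two_mul_ncard_edgeSet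
  simp only [ncard_neighborSet_cycleGraph hn, Finset.sum_const, Finset.card_univ,
    Fintype.card_fin, smul_eq_mul] at h
  omega

lemma ncard_commonNeighbors_cycleGraph_le_one {n : ℕ} (hn : 3 ≤ n) {u v : Fin (n + 2)}
    (huv : u ≠ v) : ((cycleGraph (n + 2)).commonNeighbors u v).ncard ≤ 1 := by
  have h4 : (4 : Fin (n + 2)) ≠ 0 := by
    simp [Fin.ext_iff, Nat.mod_eq_of_lt (show 4 < n + 2 by omega)]
  refine Set.ncard_le_one_iff_subsingleton.mpr fun a ha b hb => ?_
  simp only [commonNeighbors_eq, Set.mem_inter_iff, cycleGraph_neighborSet, Set.mem_insert_iff,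
    Set.mem_singleton_iff] at ha hb
  -- `a = b` unless `v = u + 2` and `v = u - 2` simultaneously, which forces `4 = 0`.
  grind

lemma ncard_commonNeighbors_completeGraph_sum_cycleGraph_add_three_le {n : ℕ} (hn : 3 ≤ n)
    {x y : Fin 2 ⊕ Fin (n + 2)} (hxy : x ≠ y)
    (h : ¬(completeGraph (Fin 2) ⊕g cycleGraph (n + 2)).Adj x y) :
    ((completeGraph (Fin 2) ⊕g cycleGraph (n + 2)).commonNeighbors x y).ncard + 3 ≤
      ((completeGraph (Fin 2) ⊕g cycleGraph (n + 2)).neighborSet x).ncard +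
        ((completeGraph (Fin 2) ⊕g cycleGraph (n + 2)).neighborSet y).ncard := by
  have hdeg_inl (a : Fin 2) :
      ((completeGraph (Fin 2) ⊕g cycleGraph (n + 2)).neighborSet (.inl a)).ncard = 1 := by
    rw [ncard_neighborSet_sum_inl, ncard_neighborSet_completeGraph, Nat.card_fin]
  have hdeg_inr (v : Fin (n + 2)) :
      ((completeGraph (Fin 2) ⊕g cycleGraph (n + 2)).neighborSet (.inr v)).ncard = 2 := by
    rw [ncard_neighborSet_sum_inr, ncard_neighborSet_cycleGraph (by omega)]
  rcases x with a | u <;> rcases y with b | v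
  · exact absurd (sum_adj_inl.mpr ((top_adj a b).mpr (Sum.inl_injective.ne_iff.mp hxy))) h
  · rw [commonNeighbors_sum_inl_inr, Set.ncard_empty, hdeg_inl, hdeg_inr]
  · rw [commonNeighbors_symm, commonNeighbors_sum_inl_inr, Set.ncard_empty, hdeg_inl, hdeg_inr]
  · rw [commonNeighbors_sum_inr, Set.ncard_image_of_injective _ Sum.inr_injective, hdeg_inr,
      hdeg_inr]
    have := ncard_commonNeighbors_cycleGraph_le_one hn (Sum.inr_injective.ne_iff.mp hxy)
    omega

end SimpleGraph

theorem stmt12 (p : ℕ) (hp : 3 ≤ p) :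
    Fintype.card (Fin 2 ⊕ Fin (p + 2)) = p + 4 ∧
    ((completeGraph (Fin 2) ⊕g SimpleGraph.cycleGraph (p + 2))ᶜ).edgeSet.ncard
      = (p + 2) * (p + 3) / 2 ∧
    ¬ ((completeGraph (Fin 2) ⊕g SimpleGraph.cycleGraph (p + 2))ᶜ).ContainsBook p := by
  have hcard : Nat.card (Fin 2 ⊕ Fin (p + 2)) = p + 4 := by simp; omega
  refine ⟨by simpa using hcard, ?_, ?_⟩
  · have h := (completeGraph (Fin 2) ⊕g cycleGraph (p + 2)).ncard_edgeSet_compl_add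
    rw [ncard_edgeSet_sum, ncard_edgeSet_completeGraph, ncard_edgeSet_cycleGraph (by omega), hcard,
      Nat.card_fin, Nat.choose_self] at h
    have hpascal : (p + 4).choose 2 = (p + 3) + (p + 3).choose 2 := by
      simpa using Nat.choose_succ_succ' (p + 3) 1
    have htriangle : (p + 2) * (p + 3) / 2 = (p + 3).choose 2 := by
      rw [Nat.choose_two_right, mul_comm]
      rfl
    omega
  · refine not_containsBook_compl _ fun x y hxy h => ?_
    have := ncard_commonNeighbors_completeGraph_sum_cycleGraph_add_three_le hp hxy h
    rw [hcard]
    omega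
end

section
/- Let p be a positive integer with p ≡ 1 (mod 3). Then the Turán number ex(p+5, B_p) equals (p+2)(p+5)/2. -/
set_option maxHeartbeats 1000000


open SimpleGraph

private lemma class_card (n q : ℕ) (h3 : 3 * q + 3 ≤ n) :
    (Finset.univ.filter (fun b : Fin n => (b : ℕ) / 3 = q)).card = 3 := by
  have he : (Finset.univ.filter (fun b : Fin n => (b : ℕ) / 3 = q)) =
      {⟨3*q, by omega⟩, ⟨3*q+1, by omega⟩, (⟨3*q+2, by omega⟩ : Fin n)} := by
    ext b
    simp only [Finset.mem_filter, Finset.mem_univ, true_and, Finset.mem_insert,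
      Finset.mem_singleton, Fin.ext_iff]
    omega
  rw [he]
  rw [Finset.card_insert_of_notMem (by simp [Fin.ext_iff]),
      Finset.card_insert_of_notMem (by simp [Fin.ext_iff]),
      Finset.card_singleton]

private lemma even_prod (p : ℕ) : (p + 2) * (p + 5) % 2 = 0 := by
  rw [Nat.mul_mod]
  rcases Nat.even_or_odd p with h | h
  · rw [Nat.even_iff] at h
    have h2 : (p + 2) % 2 = 0 := by omega
    rw [h2, Nat.zero_mul, Nat.zero_mod]
  · rw [Nat.odd_iff] at h
    have h2 : (p + 5) % 2 = 0 := by omega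
    rw [h2, Nat.mul_zero, Nat.zero_mod]

theorem stmt14 (p : ℕ) (hp : 1 ≤ p) (hmod : p % 3 = 1) :
    bookTuranNumber (p + 5) p = (p + 2) * (p + 5) / 2 := by
  classical
  set N := (p + 2) * (p + 5) / 2 with hN
  have hM2 : (p + 2) * (p + 5) % 2 = 0 := even_prod p
  have hcardV : Fintype.card (Fin (p + 5)) = p + 5 := Fintype.card_fin _
  -- Upper bound
  have hub : ∀ e ∈ {e : ℕ | ∃ G : SimpleGraph (Fin (p + 5)),
      ¬ G.ContainsBook p ∧ G.edgeSet.ncard = e}, e ≤ N := by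
    rintro e ⟨G, hG, rfl⟩
    have hnc : G.edgeSet.ncard = G.edgeFinset.card := by
      rw [← SimpleGraph.coe_edgeFinset, Set.ncard_coe_finset]
    rw [hnc]
    by_contra hlt
    push_neg at hlt
    apply hG
    -- degree sums
    have hsumG : ∑ v, G.degree v = 2 * G.edgeFinset.card :=
      G.sum_degrees_eq_twice_card_edges
    have hdc : ∀ v, Gᶜ.degree v + G.degree v = p + 4 := by
      intro v
      have h1 := G.degree_compl (v := v)
      have h2 : G.degree v < p + 5 := by
        have := G.degree_lt_card_verts v
        omega
      rw [hcardV] at h1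
      omega
    have hsumH : ∑ v, Gᶜ.degree v ≤ 2 * p + 8 := by
      have h1 : ∑ v, (Gᶜ.degree v + G.degree v) = (p + 5) * (p + 4) := by
        rw [Finset.sum_congr rfl (fun v _ => hdc v)]
        simp [Finset.card_univ, hcardV, mul_comm]
      rw [Finset.sum_add_distrib] at h1
      have h3 : (p + 5) * (p + 4) = (p + 2) * (p + 5) + 2 * (p + 5) := by ring
      have h4 : (p + 2) * (p + 5) + 2 ≤ 2 * G.edgeFinset.card := by
        set M := (p + 2) * (p + 5) with hMdef
        omega
      omega
    -- a vertex of compl-degree ≤ 1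
    obtain ⟨x, hx⟩ : ∃ x, Gᶜ.degree x ≤ 1 := by
      by_contra h
      push_neg at h
      have := Finset.card_nsmul_le_sum Finset.univ (fun v => Gᶜ.degree v) 2
        (fun v _ => h v)
      simp only [Finset.card_univ, hcardV, smul_eq_mul] at this
      omega
    -- at least three vertices of compl-degree ≤ 2
    have hS3 : 3 ≤ (Finset.univ.filter (fun v : Fin (p + 5) => Gᶜ.degree v ≤ 2)).card := by
      have h1 : 3 * (Finset.univ.filter (fun v : Fin (p + 5) => ¬ Gᶜ.degree v ≤ 2)).card ≤
          ∑ v ∈ Finset.univ.filter (fun v : Fin (p + 5) => ¬ Gᶜ.degree v ≤ 2), Gᶜ.degree v := by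
        have := Finset.card_nsmul_le_sum
          (Finset.univ.filter (fun v : Fin (p + 5) => ¬ Gᶜ.degree v ≤ 2))
          (fun v => Gᶜ.degree v) 3
          (fun v hv => by
            simp only [Finset.mem_filter, Finset.mem_univ, true_and] at hv
            show 3 ≤ Gᶜ.degree v
            omega)
        simpa [mul_comm] using this
      have h2 : ∑ v ∈ Finset.univ.filter (fun v : Fin (p + 5) => ¬ Gᶜ.degree v ≤ 2), Gᶜ.degree v
          ≤ ∑ v, Gᶜ.degree v :=
        Finset.sum_le_sum_of_subset (Finset.filter_subset _ _)
      have h3 := Finset.card_filter_add_card_filter_not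
        (s := (Finset.univ : Finset (Fin (p + 5))))
        (p := fun v : Fin (p + 5) => Gᶜ.degree v ≤ 2)
      rw [Finset.card_univ, hcardV] at h3
      omega
    -- pick y
    have hWcard : (insert x (Gᶜ.neighborFinset x)).card ≤ 2 := by
      have h1 := Finset.card_insert_le x (Gᶜ.neighborFinset x)
      have hd : (Gᶜ.neighborFinset x).card = Gᶜ.degree x := rfl
      omega
    obtain ⟨y, hy⟩ : ((Finset.univ.filter (fun v : Fin (p + 5) => Gᶜ.degree v ≤ 2)) \
        (insert x (Gᶜ.neighborFinset x))).Nonempty := by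
      rw [← Finset.card_pos]
      have := Finset.le_card_sdiff (insert x (Gᶜ.neighborFinset x))
        (Finset.univ.filter (fun v : Fin (p + 5) => Gᶜ.degree v ≤ 2))
      omega
    rw [Finset.mem_sdiff] at hy
    obtain ⟨hyS, hyW⟩ := hy
    simp only [Finset.mem_filter, Finset.mem_univ, true_and] at hyS
    have hyx : y ≠ x := fun h => hyW (by simp [h])
    have hynadj : ¬ Gᶜ.Adj x y := fun h => hyW (by simp [SimpleGraph.mem_neighborFinset, h])
    have hadjxy : G.Adj x y := by
      by_contra h
      exact hynadj ((G.compl_adj x y).2 ⟨hyx.symm, h⟩)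
    -- common neighbors
    refine ⟨x, y, hadjxy, ?_⟩
    have hW2card : (insert x (insert y (Gᶜ.neighborFinset x ∪ Gᶜ.neighborFinset y))).card ≤ 5 := by
      have h1 := Finset.card_insert_le x (insert y (Gᶜ.neighborFinset x ∪ Gᶜ.neighborFinset y))
      have h2 := Finset.card_insert_le y (Gᶜ.neighborFinset x ∪ Gᶜ.neighborFinset y)
      have h3 := Finset.card_union_le (Gᶜ.neighborFinset x) (Gᶜ.neighborFinset y)
      have hdx : (Gᶜ.neighborFinset x).card = Gᶜ.degree x := rfl
      have hdy : (Gᶜ.neighborFinset y).card = Gᶜ.degree y := rfl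
      omega
    have hsub : ↑(Finset.univ \ (insert x (insert y (Gᶜ.neighborFinset x ∪ Gᶜ.neighborFinset y))))
        ⊆ G.commonNeighbors x y := by
      intro z hz
      simp only [Finset.coe_sdiff, Finset.coe_univ, Set.mem_diff, Set.mem_univ, true_and,
        Finset.mem_coe, Finset.mem_insert, Finset.mem_union,
        SimpleGraph.mem_neighborFinset, not_or] at hz
      obtain ⟨hzx, hzy, hzax, hzay⟩ := hz
      rw [SimpleGraph.mem_commonNeighbors]
      constructor
      · by_contra h
        exact hzax ((G.compl_adj x z).2 ⟨fun he => hzx he.symm, h⟩)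
      · by_contra h
        exact hzay ((G.compl_adj y z).2 ⟨fun he => hzy he.symm, h⟩)
    have hTcard : p ≤ (Finset.univ \
        (insert x (insert y (Gᶜ.neighborFinset x ∪ Gᶜ.neighborFinset y)))).card := by
      have h1 : (Finset.univ \
          (insert x (insert y (Gᶜ.neighborFinset x ∪ Gᶜ.neighborFinset y)))).card =
          (p + 5) - (insert x (insert y (Gᶜ.neighborFinset x ∪ Gᶜ.neighborFinset y))).card := by
        rw [Finset.card_sdiff_of_subset (Finset.subset_univ _), Finset.card_univ, hcardV]
      omega
    calc p ≤ (Finset.univ \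
          (insert x (insert y (Gᶜ.neighborFinset x ∪ Gᶜ.neighborFinset y)))).card := hTcard
      _ = (↑(Finset.univ \
          (insert x (insert y (Gᶜ.neighborFinset x ∪ Gᶜ.neighborFinset y)))) :
          Set (Fin (p + 5))).ncard := (Set.ncard_coe_finset _).symm
      _ ≤ (G.commonNeighbors x y).ncard := Set.ncard_le_ncard hsub (Set.toFinite _)
  -- Lower bound construction
  have hmem : N ∈ {e : ℕ | ∃ G : SimpleGraph (Fin (p + 5)),
      ¬ G.ContainsBook p ∧ G.edgeSet.ncard = e} := by
    set G₀ : SimpleGraph (Fin (p + 5)) :=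
      SimpleGraph.fromRel (fun a b : Fin (p + 5) => (a : ℕ) / 3 ≠ (b : ℕ) / 3) with hG₀
    have hadj : ∀ a b : Fin (p + 5), G₀.Adj a b ↔ (a : ℕ) / 3 ≠ (b : ℕ) / 3 := by
      intro a b
      rw [hG₀, SimpleGraph.fromRel_adj]
      simp only [ne_eq, Fin.ext_iff]
      omega
    have hclass : ∀ a : Fin (p + 5),
        (Finset.univ.filter (fun b : Fin (p + 5) => (b : ℕ) / 3 = (a : ℕ) / 3)).card = 3 := by
      intro a
      apply class_card
      have := a.isLt
      omega
    have hdeg : ∀ a : Fin (p + 5), G₀.degree a = p + 2 := by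
      intro a
      have h1 : G₀.neighborFinset a =
          Finset.univ.filter (fun b : Fin (p + 5) => ¬ ((b : ℕ) / 3 = (a : ℕ) / 3)) := by
        ext b
        simp only [SimpleGraph.mem_neighborFinset, hadj, Finset.mem_filter, Finset.mem_univ,
          true_and]
        omega
      have h2 := Finset.card_filter_add_card_filter_not
        (s := Finset.univ) (p := fun b : Fin (p + 5) => (b : ℕ) / 3 = (a : ℕ) / 3)
      rw [Finset.card_univ, hcardV, hclass a] at h2
      rw [SimpleGraph.degree, h1]
      omega
    have hedge : G₀.edgeSet.ncard = N := by
      have hsum : ∑ v, G₀.degree v = (p + 5) * (p + 2) := by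
        rw [Finset.sum_congr rfl (fun v _ => hdeg v)]
        simp [Finset.card_univ, hcardV]
      rw [G₀.sum_degrees_eq_twice_card_edges] at hsum
      have hnc : G₀.edgeSet.ncard = G₀.edgeFinset.card := by
        rw [← SimpleGraph.coe_edgeFinset, Set.ncard_coe_finset]
      rw [hnc, hN]
      have h3 : (p + 5) * (p + 2) = (p + 2) * (p + 5) := by ring
      rw [h3] at hsum
      set M := (p + 2) * (p + 5) with hMdef
      omega
    refine ⟨G₀, ?_, hedge⟩
    rintro ⟨x, y, hxy, hcard⟩
    rw [hadj] at hxy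
    have hsub : G₀.commonNeighbors x y ⊆
        ↑(Finset.univ.filter (fun z : Fin (p + 5) =>
          ¬ ((z : ℕ) / 3 = (x : ℕ) / 3 ∨ (z : ℕ) / 3 = (y : ℕ) / 3))) := by
      intro z hz
      rw [SimpleGraph.mem_commonNeighbors, hadj, hadj] at hz
      simp only [Finset.coe_filter, Set.mem_setOf_eq, Finset.mem_univ, true_and]
      omega
    have hcard6 : (Finset.univ.filter (fun z : Fin (p + 5) =>
        ((z : ℕ) / 3 = (x : ℕ) / 3 ∨ (z : ℕ) / 3 = (y : ℕ) / 3))).card = 6 := by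
      rw [Finset.filter_or, Finset.card_union_of_disjoint]
      · rw [hclass x, hclass y]
      · rw [Finset.disjoint_filter]
        intro z _ h1
        omega
    have hfc := Finset.card_filter_add_card_filter_not
      (s := Finset.univ) (p := fun z : Fin (p + 5) =>
        ((z : ℕ) / 3 = (x : ℕ) / 3 ∨ (z : ℕ) / 3 = (y : ℕ) / 3))
    rw [Finset.card_univ, hcardV, hcard6] at hfc
    have hle : (G₀.commonNeighbors x y).ncard ≤ p - 1 := by
      calc (G₀.commonNeighbors x y).ncard
          ≤ (↑(Finset.univ.filter (fun z : Fin (p + 5) =>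
            ¬ ((z : ℕ) / 3 = (x : ℕ) / 3 ∨ (z : ℕ) / 3 = (y : ℕ) / 3))) :
            Set (Fin (p + 5))).ncard := Set.ncard_le_ncard hsub (Set.toFinite _)
        _ = (Finset.univ.filter (fun z : Fin (p + 5) =>
            ¬ ((z : ℕ) / 3 = (x : ℕ) / 3 ∨ (z : ℕ) / 3 = (y : ℕ) / 3))).card :=
            Set.ncard_coe_finset _
        _ ≤ p - 1 := by omega
    omega
  -- conclude
  rw [bookTuranNumber]
  exact le_antisymm (csSup_le ⟨N, hmem⟩ hub) (le_csSup ⟨N, hub⟩ hmem)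
end

section
/- Let G be a graph of order p+5 not containing the book B_p. If x and y are distinct vertices, each having exactly 2 non-neighbors (i.e., degree 2 in the complement Ḡ), and the distance between x and y in Ḡ is at most 2, then x and y are adjacent in Ḡ. -/
open SimpleGraph

theorem stmt16 (p : ℕ) {V : Type*} [Fintype V] (hV : Fintype.card V = p + 5)
    (G : SimpleGraph V) (hfree : ¬ G.ContainsBook p) (x y : V) (hxy : x ≠ y)
    (hx : (Gᶜ.neighborSet x).ncard = 2) (hy : (Gᶜ.neighborSet y).ncard = 2)
    (hreach : Gᶜ.Reachable x y) (hdist : Gᶜ.dist x y ≤ 2) :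
    Gᶜ.Adj x y := by
  classical
  by_contra hadj
  have hGxy : G.Adj x y := by
    by_contra h
    exact hadj ((G.compl_adj x y).mpr ⟨hxy, h⟩)
  -- dist = 2
  have hd0 : Gᶜ.dist x y ≠ 0 := by
    intro h
    exact hxy ((((Gᶜ.dist_eq_zero_iff_eq_or_not_reachable).mp h).resolve_right) (not_not_intro hreach))
  have hd1 : Gᶜ.dist x y ≠ 1 := fun h => hadj (SimpleGraph.dist_eq_one_iff_adj.mp h)
  have hd2 : Gᶜ.dist x y = 2 := by omega
  obtain ⟨w, hw⟩ := hreach.exists_walk_length_eq_dist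
  rw [hd2] at hw
  -- extract middle vertex z
  obtain ⟨z, hxz, hzy⟩ : ∃ z, Gᶜ.Adj x z ∧ Gᶜ.Adj z y := by
    cases w with
    | nil => simp at hw
    | cons h1 w' =>
      cases w' with
      | nil => simp at hw
      | cons h2 w'' =>
        cases w'' with
        | nil => exact ⟨_, h1, h2⟩
        | cons h3 w''' => simp [SimpleGraph.Walk.length_cons] at hw
  set A : Finset V := (Gᶜ.neighborSet x).toFinset with hA
  set B : Finset V := (Gᶜ.neighborSet y).toFinset with hB
  have hcardA : A.card = 2 := by rw [hA, ← Set.ncard_eq_toFinset_card']; exact hx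
  have hcardB : B.card = 2 := by rw [hB, ← Set.ncard_eq_toFinset_card']; exact hy
  have hzAB : z ∈ A ∩ B := by
    simp only [hA, hB, Finset.mem_inter, Set.mem_toFinset, SimpleGraph.mem_neighborSet]
    exact ⟨hxz, hzy.symm⟩
  have hABinter : 1 ≤ (A ∩ B).card := Finset.card_pos.mpr ⟨z, hzAB⟩
  have hunion : (A ∪ B).card ≤ 3 := by
    have := Finset.card_union_add_card_inter A B
    omega
  have hcard5 : (insert x (insert y (A ∪ B))).card ≤ 5 := by
    calc (insert x (insert y (A ∪ B))).card ≤ (insert y (A ∪ B)).card + 1 :=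
          Finset.card_insert_le _ _
      _ ≤ (A ∪ B).card + 1 + 1 := by
          have := Finset.card_insert_le y (A ∪ B); omega
      _ ≤ 5 := by omega
  set S : Finset V := Finset.univ \ insert x (insert y (A ∪ B)) with hS
  have hScard : p ≤ S.card := by
    rw [hS, Finset.card_sdiff_of_subset (Finset.subset_univ _), Finset.card_univ, hV]
    omega
  have hsub : S ⊆ (G.commonNeighbors x y).toFinset := by
    intro v hv
    simp only [hS, Finset.mem_sdiff, Finset.mem_insert, Finset.mem_union, hA, hB,
      Set.mem_toFinset, SimpleGraph.mem_neighborSet, SimpleGraph.compl_adj] at hv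
    push_neg at hv
    obtain ⟨-, hvx, hvy, hax, hay⟩ := hv
    rw [Set.mem_toFinset]
    exact ⟨hax (Ne.symm hvx), hay (Ne.symm hvy)⟩
  apply hfree
  refine ⟨x, y, hGxy, ?_⟩
  calc p ≤ S.card := hScard
    _ ≤ (G.commonNeighbors x y).toFinset.card := Finset.card_le_card hsub
    _ = (G.commonNeighbors x y).ncard := (Set.ncard_eq_toFinset_card' _).symm
end

section
/- Let G be a graph of order p+5 not containing the book B_p. If P is a path in the complement Ḡ all of whose internal vertices have degree 2 in Ḡ, then P has length at most 3. -/
open SimpleGraph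

/-!
A path of length at least 4 in `Ḡ` begins `x₀ x₁ x₂ x₃ x₄` with `x₁, x₃` internal, so their
`Ḡ`-neighbourhoods are exactly `{x₀, x₂}` and `{x₂, x₄}`. Hence `x₁ x₃` is an edge of `G`, and each
of the `p` vertices outside `{x₀, …, x₄}` is a `G`-neighbour of both `x₁` and `x₃`: a book `B_p`.
-/

namespace SimpleGraph

variable {V : Type*}

theorem Walk.IsPath.neighborSet_getVert_succ_eq_pair {H : SimpleGraph V} {u v : V}
    {P : H.Walk u v} (hP : P.IsPath) {i : ℕ} (hi : i + 2 ≤ P.length)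
    (hdeg : (H.neighborSet (P.getVert (i + 1))).ncard = 2) :
    H.neighborSet (P.getVert (i + 1)) = {P.getVert i, P.getVert (i + 2)} := by
  have hne : P.getVert i ≠ P.getVert (i + 2) :=
    hP.getVert_injOn.ne (show i ≤ P.length by omega) (show i + 2 ≤ P.length by omega) (by omega)
  refine (Set.eq_of_subset_of_ncard_le ?_ ?_ (Set.finite_of_ncard_ne_zero (by omega))).symm
  · rintro z (rfl | rfl)
    · exact (P.adj_getVert_succ (by omega)).symm
    · exact P.adj_getVert_succ (by omega)
  · rw [hdeg, Set.ncard_pair hne]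

theorem adj_of_compl_neighborSet_subset {G : SimpleGraph V} {a z : V} {T : Set V}
    (hT : Gᶜ.neighborSet a ⊆ T) (ha : a ∈ T) (hz : z ∉ T) : G.Adj a z := by
  by_contra h
  exact hz (hT ((compl_adj G a z).2 ⟨fun haz => hz (haz ▸ ha), h⟩))

theorem containsBook_of_compl_neighborSet_subset [Fintype V] {G : SimpleGraph V} {p : ℕ}
    {a c : V} (T : Finset V) (hac : G.Adj a c) (ha : a ∈ T) (hc : c ∈ T)
    (hTa : Gᶜ.neighborSet a ⊆ T) (hTc : Gᶜ.neighborSet c ⊆ T)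
    (hp : p + T.card ≤ Fintype.card V) : G.ContainsBook p := by
  have hsub : (↑T : Set V)ᶜ ⊆ G.commonNeighbors a c := fun z hz =>
    ⟨adj_of_compl_neighborSet_subset hTa ha hz, adj_of_compl_neighborSet_subset hTc hc hz⟩
  refine ⟨a, c, hac, ?_⟩
  calc p ≤ Nat.card V - (↑T : Set V).ncard := by
        rw [Set.ncard_coe_finset, Nat.card_eq_fintype_card]; omega
    _ = (↑T : Set V)ᶜ.ncard := (Set.ncard_compl _).symm
    _ ≤ (G.commonNeighbors a c).ncard := Set.ncard_le_ncard hsub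

end SimpleGraph

theorem stmt17 (p : ℕ) {V : Type*} [Fintype V] (hV : Fintype.card V = p + 5)
    (G : SimpleGraph V) (hfree : ¬ G.ContainsBook p) (u v : V) (P : Gᶜ.Walk u v)
    (hP : P.IsPath) (hint : ∀ w ∈ P.support, w ≠ u → w ≠ v → (Gᶜ.neighborSet w).ncard = 2) :
    P.length ≤ 3 := by
  classical
  by_contra! hlen
  set x := P.getVert
  have hne : ∀ i j, i ≤ 4 → j ≤ 4 → i ≠ j → x i ≠ x j := fun i j hi hj =>
    hP.getVert_injOn.ne (show i ≤ P.length by omega) (show j ≤ P.length by omega)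
  have hdeg : ∀ i, i + 2 ≤ P.length → (Gᶜ.neighborSet (x (i + 1))).ncard = 2 := fun i hi =>
    hint _ (P.getVert_mem_support _) (by rw [Ne, hP.getVert_eq_start_iff (by omega)]; omega)
      (by rw [Ne, hP.getVert_eq_end_iff (by omega)]; omega)
  have hN1 : Gᶜ.neighborSet (x 1) = {x 0, x 2} :=
    hP.neighborSet_getVert_succ_eq_pair (by omega) (hdeg 0 (by omega))
  have hN3 : Gᶜ.neighborSet (x 3) = {x 2, x 4} :=
    hP.neighborSet_getVert_succ_eq_pair (by omega) (hdeg 2 (by omega))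
  have hG13 : G.Adj (x 1) (x 3) := by
    refine adj_of_compl_neighborSet_subset (T := {x 0, x 1, x 2}) ?_ (by simp) ?_
    · rw [hN1]; exact Set.insert_subset_insert (Set.subset_insert _ _)
    · simp only [Set.mem_insert_iff, Set.mem_singleton_iff, not_or]
      refine ⟨?_, ?_, ?_⟩ <;> exact hne _ _ (by omega) (by omega) (by omega)
  have hmem : ∀ i < 5, x i ∈ (Finset.range 5).image x := fun i hi =>
    Finset.mem_image_of_mem x (Finset.mem_range.2 hi)
  refine hfree (containsBook_of_compl_neighborSet_subset ((Finset.range 5).image x) hG13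
    (hmem 1 (by omega)) (hmem 3 (by omega)) ?_ ?_ ?_)
  · rw [hN1, Set.insert_subset_iff, Set.singleton_subset_iff]
    exact ⟨hmem 0 (by omega), hmem 2 (by omega)⟩
  · rw [hN3, Set.insert_subset_iff, Set.singleton_subset_iff]
    exact ⟨hmem 2 (by omega), hmem 4 (by omega)⟩
  · rw [hV, add_le_add_iff_left]
    exact Finset.card_image_le.trans_eq (Finset.card_range 5)
end
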